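/- arXiv:2207.13526 — 6 statements merged into one kernel-verified Lean document; each statement's English description precedes it below -/
import Mathlib

section
/- (Aitken / generalized Gauss–Markov inequality) Let A be a real p×n matrix with rank A = n and let C be a symmetric positive definite real p×p matrix. Then for every real n×p matrix L with L·A = Iₙ, the matrix L·C·Lᵀ − (AᵀC⁻¹A)⁻¹ is positive semidefinite. In other words, among all linear unbiased estimators Lb of u from data b = Au + e with cov(e) = C, the GLS estimator has the smallest covariance in the Loewner order. -/
/-!
Write `M = Aᴴ C⁻¹ A` and `G = M⁻¹ Aᴴ C⁻¹` for the GLS estimator. Since `C Gᴴ = A M⁻¹`,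
every unbiased `L` (i.e. `L A = 1`, which `G` is too) satisfies `L C Gᴴ = M⁻¹`. Hence
`L - G` is `C`-orthogonal to `G`, and `L C Lᴴ - M⁻¹ = (L - G) C (L - G)ᴴ`, which is
positive semidefinite.
-/

open Matrix

namespace Matrix

variable {m n : Type*} [Fintype m] [Fintype n]

theorem mulVec_injective_of_mul_eq_one {R : Type*} [CommRing R] [DecidableEq n]
    {L : Matrix n m R} {A : Matrix m n R} (hL : L * A = 1) : Function.Injective A.mulVec :=
  Function.LeftInverse.injective (g := L.mulVec) fun x => by rw [mulVec_mulVec, hL, one_mulVec]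

variable [DecidableEq m] [DecidableEq n]

section CommRing

variable {R : Type*} [CommRing R] [StarRing R]

noncomputable def glsEstimator (A : Matrix m n R) (C : Matrix m m R) : Matrix n m R :=
  (Aᴴ * C⁻¹ * A)⁻¹ * Aᴴ * C⁻¹

variable {A : Matrix m n R} {C : Matrix m m R}

theorem glsEstimator_mul (hM : IsUnit (Aᴴ * C⁻¹ * A).det) : glsEstimator A C * A = 1 := by
  rw [glsEstimator, Matrix.mul_assoc, Matrix.mul_assoc, ← Matrix.mul_assoc Aᴴ,
    nonsing_inv_mul _ hM]

theorem mul_mul_conjTranspose_glsEstimator (hC : C.IsHermitian) (hCu : IsUnit C.det)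
    {L : Matrix n m R} (hL : L * A = 1) :
    L * C * (glsEstimator A C)ᴴ = (Aᴴ * C⁻¹ * A)⁻¹ := by
  have hM : (Aᴴ * C⁻¹ * A).IsHermitian := isHermitian_conjTranspose_mul_mul A hC.inv
  have hCG : C * (glsEstimator A C)ᴴ = A * (Aᴴ * C⁻¹ * A)⁻¹ := by
    rw [glsEstimator, conjTranspose_mul, conjTranspose_mul, hC.inv.eq, hM.inv.eq,
      conjTranspose_conjTranspose, ← Matrix.mul_assoc, ← Matrix.mul_assoc,
      mul_nonsing_inv _ hCu, Matrix.one_mul]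
  rw [Matrix.mul_assoc, hCG, ← Matrix.mul_assoc, hL, Matrix.one_mul]

theorem mul_mul_conjTranspose_sub_inv_eq (hC : C.IsHermitian) (hCu : IsUnit C.det)
    (hM : IsUnit (Aᴴ * C⁻¹ * A).det) {L : Matrix n m R} (hL : L * A = 1) :
    L * C * Lᴴ - (Aᴴ * C⁻¹ * A)⁻¹ =
      (L - glsEstimator A C) * C * (L - glsEstimator A C)ᴴ := by
  have hLG := mul_mul_conjTranspose_glsEstimator hC hCu hL
  have hGG := mul_mul_conjTranspose_glsEstimator hC hCu (glsEstimator_mul hM)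
  have hGL : glsEstimator A C * C * Lᴴ = (Aᴴ * C⁻¹ * A)⁻¹ :=
    calc glsEstimator A C * C * Lᴴ = (L * C * (glsEstimator A C)ᴴ)ᴴ := by
          simp only [conjTranspose_mul, conjTranspose_conjTranspose, hC.eq, Matrix.mul_assoc]
      _ = (Aᴴ * C⁻¹ * A)⁻¹ := by
          rw [hLG, (isHermitian_conjTranspose_mul_mul A hC.inv).inv.eq]
  simp only [conjTranspose_sub, Matrix.sub_mul, Matrix.mul_sub, hLG, hGG, hGL]
  abel

end CommRing

theorem posSemidef_mul_mul_conjTranspose_sub_inv {K : Type*} [Field K] [PartialOrder K]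
    [StarRing K] {A : Matrix m n K} {C : Matrix m m K} (hC : C.PosDef) {L : Matrix n m K}
    (hL : L * A = 1) : (L * C * Lᴴ - (Aᴴ * C⁻¹ * A)⁻¹).PosSemidef := by
  have hM : (Aᴴ * C⁻¹ * A).PosDef :=
    hC.inv.conjTranspose_mul_mul_same (mulVec_injective_of_mul_eq_one hL)
  rw [mul_mul_conjTranspose_sub_inv_eq hC.isHermitian (isUnit_iff_isUnit_det C |>.mp hC.isUnit)
    ((isUnit_iff_isUnit_det _).mp hM.isUnit) hL]
  exact hC.posSemidef.mul_mul_conjTranspose_same _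

end Matrix

theorem aitken_inequality_general {p n : ℕ}
    (A : Matrix (Fin p) (Fin n) ℝ) (C : Matrix (Fin p) (Fin p) ℝ)
    (hC : C.PosDef)
    (L : Matrix (Fin n) (Fin p) ℝ) (hL : L * A = 1) :
    (L * C * Lᵀ - (Aᵀ * C⁻¹ * A)⁻¹).PosSemidef := by
  simpa only [conjTranspose_eq_transpose_of_trivial] using
    posSemidef_mul_mul_conjTranspose_sub_inv hC hL

/-- **Aitken / generalized Gauss–Markov inequality.** For any linear unbiased
estimator `L` (i.e. `L * A = 1`), the matrix `L C Lᵀ − (AᵀC⁻¹A)⁻¹` is positive semidefinite. -/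
theorem aitken_inequality {p n : ℕ}
    (A : Matrix (Fin p) (Fin n) ℝ) (C : Matrix (Fin p) (Fin p) ℝ)
    (hA : A.rank = n) (hC : C.PosDef)
    (L : Matrix (Fin n) (Fin p) ℝ) (hL : L * A = 1) :
    (L * C * Lᵀ - (Aᵀ * C⁻¹ * A)⁻¹).PosSemidef :=
  aitken_inequality_general A C hC L hL
end

section
/- (Aitken equality case) Let A be a real p×n matrix with rank A = n and let C be a symmetric positive definite real p×p matrix. If L is a real n×p matrix with L·A = Iₙ and L·C·Lᵀ = (AᵀC⁻¹A)⁻¹, then L = (AᵀC⁻¹A)⁻¹AᵀC⁻¹. That is, the GLS estimator is the unique best linear unbiased estimator. -/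
/-!
Let `K = (AᵀC⁻¹A)⁻¹AᵀC⁻¹`. For every `L` with `L A = 1` one has `K C Lᵀ = (AᵀC⁻¹A)⁻¹`, and
applying this to `L` and to `K` itself (which is unbiased) yields the covariance decomposition
`L C Lᵀ = (AᵀC⁻¹A)⁻¹ + (L - K) C (L - K)ᵀ`. Equality of covariances thus forces
`(L - K) C (L - K)ᵀ = 0`, and since `C` is positive definite, `L = K`. Full column rank of `A`
is what makes `AᵀC⁻¹A` positive definite, hence invertible.
-/

open Matrix

namespace Matrix

variable {m n R : Type*} [Fintype n]

theorem mulVec_injective_of_rank_eq_card {K : Type*} [Field K] {A : Matrix m n K}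
    (hA : A.rank = Fintype.card n) : Function.Injective A.mulVec := by
  have hker : Module.finrank K (LinearMap.ker A.mulVecLin) = 0 := by
    have := LinearMap.finrank_range_add_finrank_ker A.mulVecLin
    rw [← Matrix.rank, hA, Module.finrank_fintype_fun_eq_card] at this
    omega
  rw [← coe_mulVecLin, ← LinearMap.ker_eq_bot]
  exact Submodule.finrank_eq_zero.mp hker

theorem PosDef.eq_zero_of_mul_mul_conjTranspose_eq_zero [Fintype m] [CommRing R] [PartialOrder R]
    [StarRing R] {C : Matrix n n R} {D : Matrix m n R} (hC : C.PosDef) (hD : D * C * Dᴴ = 0) :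
    D = 0 := by
  suffices ∀ x, Dᴴ *ᵥ x = 0 by
    simpa using (ext_iff_mulVec (A := Dᴴ) (B := 0)).mpr (by simpa using this)
  intro x
  by_contra hx
  have hquad : star (Dᴴ *ᵥ x) ⬝ᵥ (C *ᵥ (Dᴴ *ᵥ x)) = star x ⬝ᵥ ((D * C * Dᴴ) *ᵥ x) := by
    simp only [star_mulVec, conjTranspose_conjTranspose, dotProduct_mulVec, vecMul_vecMul,
      mulVec_mulVec, Matrix.mul_assoc]
  simpa [hD] using (hC.dotProduct_mulVec_pos hx).trans_eq hquad

section GLS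

variable [Fintype m] [DecidableEq m] [DecidableEq n] [CommRing R]
  {A : Matrix m n R} {C : Matrix m m R}

noncomputable def glsMatrix (A : Matrix m n R) (C : Matrix m m R) : Matrix n m R :=
  (Aᵀ * C⁻¹ * A)⁻¹ * (Aᵀ * C⁻¹)

theorem glsMatrix_mul_self (hG : IsUnit (Aᵀ * C⁻¹ * A).det) : glsMatrix A C * A = 1 := by
  rw [glsMatrix, Matrix.mul_assoc, nonsing_inv_mul _ hG]

theorem glsMatrix_mul_mul_transpose {L : Matrix n m R} (hC : IsUnit C.det) (hL : L * A = 1) :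
    glsMatrix A C * C * Lᵀ = (Aᵀ * C⁻¹ * A)⁻¹ := by
  rw [glsMatrix, Matrix.mul_assoc _ (Aᵀ * C⁻¹) C, Matrix.mul_assoc Aᵀ C⁻¹ C, nonsing_inv_mul _ hC,
    Matrix.mul_one, Matrix.mul_assoc, ← transpose_mul, hL, transpose_one, Matrix.mul_one]

theorem sub_glsMatrix_mul_mul_transpose {L : Matrix n m R} (hCsymm : Cᵀ = C) (hC : IsUnit C.det)
    (hG : IsUnit (Aᵀ * C⁻¹ * A).det) (hL : L * A = 1) :
    (L - glsMatrix A C) * C * (L - glsMatrix A C)ᵀ = L * C * Lᵀ - (Aᵀ * C⁻¹ * A)⁻¹ := by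
  have hGsymm : (Aᵀ * C⁻¹ * A)⁻¹ᵀ = (Aᵀ * C⁻¹ * A)⁻¹ := by
    rw [transpose_nonsing_inv, transpose_mul, transpose_mul, transpose_nonsing_inv, hCsymm,
      transpose_transpose, Matrix.mul_assoc]
  have hcross : L * C * (glsMatrix A C)ᵀ = (Aᵀ * C⁻¹ * A)⁻¹ := by
    rw [← hGsymm, ← glsMatrix_mul_mul_transpose hC hL, transpose_mul, transpose_mul,
      transpose_transpose, hCsymm, Matrix.mul_assoc]
  simp only [transpose_sub, Matrix.sub_mul, Matrix.mul_sub]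
  rw [hcross, glsMatrix_mul_mul_transpose hC hL,
    glsMatrix_mul_mul_transpose hC (glsMatrix_mul_self hG)]
  abel

end GLS

end Matrix

/-- **Aitken equality case.** If a linear unbiased estimator `L` attains the
GLS covariance `(AᵀC⁻¹A)⁻¹`, then `L` is the GLS estimator `(AᵀC⁻¹A)⁻¹AᵀC⁻¹`. -/
theorem aitken_equality_case {p n : ℕ}
    (A : Matrix (Fin p) (Fin n) ℝ) (C : Matrix (Fin p) (Fin p) ℝ)
    (hA : A.rank = n) (hC : C.PosDef)
    (L : Matrix (Fin n) (Fin p) ℝ) (hL : L * A = 1)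
    (hcov : L * C * Lᵀ = (Aᵀ * C⁻¹ * A)⁻¹) :
    L = (Aᵀ * C⁻¹ * A)⁻¹ * (Aᵀ * C⁻¹) := by
  have hinj : Function.Injective A.mulVec := mulVec_injective_of_rank_eq_card (by simpa using hA)
  have hG : (Aᵀ * C⁻¹ * A).PosDef := by simpa using hC.inv.conjTranspose_mul_mul_same hinj
  have hCsymm : Cᵀ = C := by simpa using hC.isHermitian.eq
  have hD := sub_glsMatrix_mul_mul_transpose hCsymm ((isUnit_iff_isUnit_det C).mp hC.isUnit)
    ((isUnit_iff_isUnit_det _).mp hG.isUnit) hL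
  rw [hcov, sub_self] at hD
  rw [← conjTranspose_eq_transpose_of_trivial] at hD
  exact sub_eq_zero.mp (hC.eq_zero_of_mul_mul_conjTranspose_eq_zero hD)
end

section
/- Let A be a real p×n matrix, U an invertible real p×p matrix, and b ∈ ℝᵖ. Suppose UA = QR where Q is a real p×n matrix with orthonormal columns (QᵀQ = Iₙ) and R is an invertible upper triangular n×n matrix (a thin QR factorization). Then x̂ = R⁻¹Qᵀ(Ub) is the unique global minimizer over ℝⁿ of x ↦ ‖U(Ax − b)‖₂². -/
/-! Since `Qᵀ Q = 1`, the residual `QRx − c` splits orthogonally into `Q(Rx − Qᵀc)` and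
`QQᵀc − c`, so `‖QRx − c‖² = ‖Rx − Qᵀc‖² + ‖QQᵀc − c‖²`. The second term does not depend on
`x`, and the first vanishes exactly when `Rx = Qᵀc`, i.e. at `x = R⁻¹Qᵀc`. With `UA = QR` and
`c = Ub` this is the objective `‖U(Ax − b)‖²`. -/

open Matrix

namespace Matrix

variable {m n α : Type*} [Fintype m] [Fintype n] [DecidableEq n] [CommRing α] {Q : Matrix m n α}

theorem mulVec_dotProduct_mulVec_of_transpose_mul_self (hQ : Qᵀ * Q = 1) (v w : n → α) :
    Q *ᵥ v ⬝ᵥ Q *ᵥ w = v ⬝ᵥ w := by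
  rw [dotProduct_mulVec, vecMul_mulVec, hQ, vecMul_one]

theorem mulVec_dotProduct_projection_sub_of_transpose_mul_self (hQ : Qᵀ * Q = 1)
    (v : n → α) (c : m → α) : Q *ᵥ v ⬝ᵥ (Q *ᵥ (Qᵀ *ᵥ c) - c) = 0 := by
  rw [dotProduct_sub, mulVec_dotProduct_mulVec_of_transpose_mul_self hQ, dotProduct_mulVec,
    vecMul_transpose, sub_self]

theorem mulVec_sub_dotProduct_self_of_transpose_mul_self (hQ : Qᵀ * Q = 1)
    (v : n → α) (c : m → α) :
    (Q *ᵥ v - c) ⬝ᵥ (Q *ᵥ v - c) =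
      (v - Qᵀ *ᵥ c) ⬝ᵥ (v - Qᵀ *ᵥ c) +
        (Q *ᵥ (Qᵀ *ᵥ c) - c) ⬝ᵥ (Q *ᵥ (Qᵀ *ᵥ c) - c) := by
  have hsplit : Q *ᵥ v - c = Q *ᵥ (v - Qᵀ *ᵥ c) + (Q *ᵥ (Qᵀ *ᵥ c) - c) := by
    rw [mulVec_sub]; abel
  have horth := mulVec_dotProduct_projection_sub_of_transpose_mul_self hQ (v - Qᵀ *ᵥ c) c
  rw [hsplit, add_dotProduct, dotProduct_add, dotProduct_add,
    mulVec_dotProduct_mulVec_of_transpose_mul_self hQ, horth, dotProduct_comm _ (Q *ᵥ _), horth,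
    add_zero, zero_add]

variable [LinearOrder α] [IsStrictOrderedRing α]

omit [DecidableEq n] in
theorem dotProduct_self_pos {v : n → α} (hv : v ≠ 0) : 0 < v ⬝ᵥ v :=
  lt_of_le_of_ne (Finset.sum_nonneg fun i _ => mul_self_nonneg (v i))
    (Ne.symm (dotProduct_self_eq_zero.not.mpr hv))

theorem mul_mulVec_sub_dotProduct_self_lt_of_ne_inv_mulVec {R : Matrix n n α}
    (hQ : Qᵀ * Q = 1) (hR : IsUnit R) (c : m → α) {x : n → α}
    (hx : x ≠ R⁻¹ *ᵥ (Qᵀ *ᵥ c)) :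
    ((Q * R) *ᵥ (R⁻¹ *ᵥ (Qᵀ *ᵥ c)) - c) ⬝ᵥ ((Q * R) *ᵥ (R⁻¹ *ᵥ (Qᵀ *ᵥ c)) - c) <
      ((Q * R) *ᵥ x - c) ⬝ᵥ ((Q * R) *ᵥ x - c) := by
  have hdet : IsUnit R.det := (isUnit_iff_isUnit_det R).mp hR
  have hRx : R *ᵥ x - Qᵀ *ᵥ c ≠ 0 := by
    refine sub_ne_zero.mpr fun h => hx ?_
    rw [← h, mulVec_mulVec, nonsing_inv_mul R hdet, one_mulVec]
  have hsplit (z : n → α) := mulVec_mulVec z Q R ▸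
    mulVec_sub_dotProduct_self_of_transpose_mul_self hQ (R *ᵥ z) c
  rw [hsplit, hsplit, mulVec_mulVec, mul_nonsing_inv R hdet, one_mulVec, sub_self,
    zero_dotProduct, zero_add]
  exact lt_add_of_pos_left _ (dotProduct_self_pos hRx)

end Matrix

theorem gls_thinQR_minimizer_general {p n : ℕ}
    (A : Matrix (Fin p) (Fin n) ℝ) (U : Matrix (Fin p) (Fin p) ℝ)
    (b : Fin p → ℝ)
    (Q : Matrix (Fin p) (Fin n) ℝ) (R : Matrix (Fin n) (Fin n) ℝ)
    (hQ : Qᵀ * Q = 1) (hR : IsUnit R)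
    (hQR : U * A = Q * R) :
    ∀ x : Fin n → ℝ,
      x ≠ R⁻¹ *ᵥ (Qᵀ *ᵥ (U *ᵥ b)) →
      (U *ᵥ (A *ᵥ (R⁻¹ *ᵥ (Qᵀ *ᵥ (U *ᵥ b))) - b)) ⬝ᵥ
        (U *ᵥ (A *ᵥ (R⁻¹ *ᵥ (Qᵀ *ᵥ (U *ᵥ b))) - b)) <
      (U *ᵥ (A *ᵥ x - b)) ⬝ᵥ (U *ᵥ (A *ᵥ x - b)) := by
  intro x hx
  have hobjective : ∀ z, U *ᵥ (A *ᵥ z - b) = (Q * R) *ᵥ z - U *ᵥ b := fun z => by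
    rw [mulVec_sub, mulVec_mulVec, hQR]
  rw [hobjective, hobjective]
  exact mul_mulVec_sub_dotProduct_self_lt_of_ne_inv_mulVec hQ hR (U *ᵥ b) hx

/-- If `UA = QR` is a thin QR factorization (`QᵀQ = Iₙ`, `R` invertible
upper triangular), then `x̂ = R⁻¹Qᵀ(Ub)` is the unique global minimizer of
`x ↦ ‖U(Ax − b)‖₂²`. -/
theorem gls_thinQR_minimizer {p n : ℕ}
    (A : Matrix (Fin p) (Fin n) ℝ) (U : Matrix (Fin p) (Fin p) ℝ)
    (hU : IsUnit U) (b : Fin p → ℝ)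
    (Q : Matrix (Fin p) (Fin n) ℝ) (R : Matrix (Fin n) (Fin n) ℝ)
    (hQ : Qᵀ * Q = 1) (hR : IsUnit R) (hRtri : R.BlockTriangular id)
    (hQR : U * A = Q * R) :
    ∀ x : Fin n → ℝ,
      x ≠ R⁻¹ *ᵥ (Qᵀ *ᵥ (U *ᵥ b)) →
      (U *ᵥ (A *ᵥ (R⁻¹ *ᵥ (Qᵀ *ᵥ (U *ᵥ b))) - b)) ⬝ᵥ
        (U *ᵥ (A *ᵥ (R⁻¹ *ᵥ (Qᵀ *ᵥ (U *ᵥ b))) - b)) <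
      (U *ᵥ (A *ᵥ x - b)) ⬝ᵥ (U *ᵥ (A *ᵥ x - b)) :=
  gls_thinQR_minimizer_general A U b Q R hQ hR hQR
end

section
/- Let R be an invertible real (n₁+n₂)×(n₁+n₂) matrix written in block upper triangular form R = [[R₁₁, R₁₂],[0, R₂₂]] with R₁₁ of size n₁×n₁ and R₂₂ of size n₂×n₂. Then R₂₂ is invertible and the bottom-right n₂×n₂ block of (RᵀR)⁻¹ equals (R₂₂ᵀR₂₂)⁻¹. (Hence the covariance of the last, filtered, state estimate satisfies cov(û_{k|k})⁻¹ = R̃_{k,k}ᵀR̃_{k,k}, where R̃_{k,k} is the last diagonal block of the triangular factor.) -/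
/-!
Since `(RᵀR)⁻¹ = R⁻¹ (R⁻¹)ᵀ` and the inverse of a block upper triangular matrix is again block
upper triangular with diagonal blocks `R₁₁⁻¹` and `R₂₂⁻¹`, the bottom-right block of
`R⁻¹ (R⁻¹)ᵀ` only sees the bottom row `[0, R₂₂⁻¹]` of `R⁻¹`, and equals
`R₂₂⁻¹ (R₂₂⁻¹)ᵀ = (R₂₂ᵀR₂₂)⁻¹`.
-/

open Matrix

namespace Matrix

variable {m n α : Type*} [Fintype m] [Fintype n]

theorem inv_transpose_mul_self [DecidableEq n] [CommRing α] (M : Matrix n n α) :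
    (Mᵀ * M)⁻¹ = M⁻¹ * M⁻¹ᵀ := by
  rw [mul_inv_rev, transpose_nonsing_inv]

theorem toBlocks₂₂_mul_transpose_fromBlocks_zero₂₁ [NonUnitalNonAssocSemiring α]
    (A : Matrix m m α) (B : Matrix m n α) (D : Matrix n n α) :
    (fromBlocks A B 0 D * (fromBlocks A B 0 D)ᵀ).toBlocks₂₂ = D * Dᵀ := by
  simp [fromBlocks_transpose, fromBlocks_multiply]

end Matrix

/-- For an invertible block upper triangular `R = [[R₁₁, R₁₂],[0, R₂₂]]`,
the block `R₂₂` is invertible and the bottom-right block of `(RᵀR)⁻¹` equals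
`(R₂₂ᵀR₂₂)⁻¹`. -/
theorem filtered_covariance_block {n₁ n₂ : ℕ}
    (R₁₁ : Matrix (Fin n₁) (Fin n₁) ℝ) (R₁₂ : Matrix (Fin n₁) (Fin n₂) ℝ)
    (R₂₂ : Matrix (Fin n₂) (Fin n₂) ℝ)
    (hR : IsUnit (fromBlocks R₁₁ R₁₂ 0 R₂₂)) :
    IsUnit R₂₂ ∧
    ((fromBlocks R₁₁ R₁₂ 0 R₂₂)ᵀ * fromBlocks R₁₁ R₁₂ 0 R₂₂)⁻¹.toBlocks₂₂ =
      (R₂₂ᵀ * R₂₂)⁻¹ := by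
  obtain ⟨hR₁₁, hR₂₂⟩ := isUnit_fromBlocks_zero₂₁.mp hR
  refine ⟨hR₂₂, ?_⟩
  rw [inv_transpose_mul_self, inv_transpose_mul_self,
    inv_fromBlocks_zero₂₁_of_isUnit_iff _ _ _ (iff_of_true hR₁₁ hR₂₂),
    toBlocks₂₂_mul_transpose_fromBlocks_zero₂₁]
end

section
/- Let R be an invertible real (n₁+n₂)×(n₁+n₂) matrix, and let Q be an (n₁+n₂)×(n₁+n₂) orthogonal matrix (QᵀQ = I) such that QᵀR = [[S₁₁, S₁₂],[S₂₁, 0]] in block form, where S₂₁ is n₁×n₁ (and S₁₂ is n₂×n₂, S₁₁ is n₂×n₁, and the bottom-right n₁×n₂ block is zero). Then S₂₁ is invertible and the top-left n₁×n₁ block of (RᵀR)⁻¹ equals (S₂₁ᵀS₂₁)⁻¹. (This is the correctness of the orthogonal-transformation algorithm that produces inverse-factor representations of the covariance matrices of smoothed state estimates.) -/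
/-!
Rotating by the orthogonal `Q` does not change the Gram matrix, so `RᵀR = SᵀS` with
`S = QᵀR`. Swapping the two row blocks of `S` (again Gram-preserving) gives the block
lower-triangular `L = [[S₂₁, 0], [S₁₁, S₁₂]]`, which is invertible because `R` is. Then
`(LᵀL)⁻¹ = L⁻¹L⁻ᵀ`, and since the first block row of `L⁻¹` is `[S₂₁⁻¹, 0]`, its top-left
block is `S₂₁⁻¹S₂₁⁻ᵀ = (S₂₁ᵀS₂₁)⁻¹`.
-/

open Matrix

namespace Matrix

variable {l m n o α : Type*} [Fintype m]

theorem transpose_mul_transpose_mul_self_of_mul_transpose_eq_one [Fintype n] [DecidableEq m]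
    [CommSemiring α] {Q : Matrix m n α} (hQ : Q * Qᵀ = 1) (R : Matrix m o α) :
    (Qᵀ * R)ᵀ * (Qᵀ * R) = Rᵀ * R := by
  rw [transpose_mul, transpose_transpose, Matrix.mul_assoc, ← Matrix.mul_assoc Q, hQ,
    Matrix.one_mul]

theorem transpose_mul_self_submatrix_equiv [Fintype l] [CommSemiring α] (M : Matrix m n α)
    (e : l ≃ m) :
    (M.submatrix e id)ᵀ * M.submatrix e id = Mᵀ * M := by
  rw [transpose_submatrix, submatrix_mul_equiv, submatrix_id_id]

theorem isUnit_of_isUnit_transpose_mul_self [DecidableEq m] [CommRing α] {M : Matrix m m α}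
    (h : IsUnit (Mᵀ * M)) : IsUnit M := by
  rw [isUnit_iff_isUnit_det, det_mul, det_transpose] at h
  exact (isUnit_iff_isUnit_det M).mpr (IsUnit.mul_iff.mp h).1

theorem toBlocks₁₁_inv_transpose_mul_self_fromBlocks_zero₁₂ [Fintype n] [DecidableEq m]
    [DecidableEq n] [CommRing α] (A : Matrix m m α) (C : Matrix n m α) (D : Matrix n n α)
    (hAD : IsUnit A ↔ IsUnit D) :
    ((fromBlocks A 0 C D)ᵀ * fromBlocks A 0 C D)⁻¹.toBlocks₁₁ = (Aᵀ * A)⁻¹ := by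
  rw [Matrix.mul_inv_rev, ← transpose_nonsing_inv,
    inv_fromBlocks_zero₁₂_of_isUnit_iff _ _ _ hAD, fromBlocks_transpose, fromBlocks_multiply,
    toBlocks_fromBlocks₁₁, transpose_zero, Matrix.mul_zero, add_zero, transpose_nonsing_inv, ← Matrix.mul_inv_rev]

end Matrix

/-- If `R` is invertible and `Q` is orthogonal with
`QᵀR = [[S₁₁, S₁₂],[S₂₁, 0]]` (where `S₂₁` is `n₁ × n₁`), then `S₂₁` is invertible and the
top-left `n₁ × n₁` block of `(RᵀR)⁻¹` equals `(S₂₁ᵀS₂₁)⁻¹`. -/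
theorem smoothed_covariance_block {n₁ n₂ : ℕ}
    (R : Matrix (Fin n₁ ⊕ Fin n₂) (Fin n₁ ⊕ Fin n₂) ℝ) (hR : IsUnit R)
    (Q : Matrix (Fin n₁ ⊕ Fin n₂) (Fin n₂ ⊕ Fin n₁) ℝ) (hQ : Qᵀ * Q = 1)
    (S₁₁ : Matrix (Fin n₂) (Fin n₁) ℝ) (S₁₂ : Matrix (Fin n₂) (Fin n₂) ℝ)
    (S₂₁ : Matrix (Fin n₁) (Fin n₁) ℝ)
    (hQR : Qᵀ * R = fromBlocks S₁₁ S₁₂ S₂₁ 0) :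
    IsUnit S₂₁ ∧ ((Rᵀ * R)⁻¹).toBlocks₁₁ = (S₂₁ᵀ * S₂₁)⁻¹ := by
  have hQQ : Q * Qᵀ = 1 :=
    (mul_eq_one_comm_of_equiv (Equiv.sumComm (Fin n₁) (Fin n₂))).mpr hQ
  set L := fromBlocks S₂₁ 0 S₁₁ S₁₂
  have hL : (fromBlocks S₁₁ S₁₂ S₂₁ 0).submatrix (Equiv.sumComm _ _) id = L := by
    simp [L]
  have hGram : Rᵀ * R = Lᵀ * L := by
    rw [← transpose_mul_transpose_mul_self_of_mul_transpose_eq_one hQQ R, hQR, ← hL,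
      transpose_mul_self_submatrix_equiv]
  have hS : IsUnit S₂₁ ∧ IsUnit S₁₂ :=
    isUnit_fromBlocks_zero₁₂.mp <|
      isUnit_of_isUnit_transpose_mul_self (hGram ▸ ((isUnit_transpose R).mpr hR).mul hR)
  refine ⟨hS.1, ?_⟩
  rw [hGram,
    toBlocks₁₁_inv_transpose_mul_self_fromBlocks_zero₁₂ _ _ _ (iff_of_true hS.1 hS.2)]
end

section
/- (Duncan–Horn equivalence, one-step form) Let P be a symmetric positive definite n×n real matrix, C a symmetric positive definite m×m real matrix, G a real m×n matrix, a ∈ ℝⁿ, and o ∈ ℝᵐ. Then the function u ↦ (u − a)ᵀP⁻¹(u − a) + (Gu − o)ᵀC⁻¹(Gu − o) has a unique global minimizer over ℝⁿ, given by the Kalman measurement-update formula û = a + PGᵀ(GPGᵀ + C)⁻¹(o − Ga). -/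
/-!
The cost `J(u) = (u - a)ᵀP⁻¹(u - a) + (Gu - o)ᵀC⁻¹(Gu - o)` is a quadratic with positive definite
Hessian `P⁻¹ + GᵀC⁻¹G`, so it is strictly minimized exactly where its gradient vanishes, i.e. at
the solution of the normal equation `P⁻¹(û - a) + GᵀC⁻¹(Gû - o) = 0`. Expanding `J(û + d)` around
such a point, the cross term is `2 dᵀ` times the gradient, leaving
`J(û + d) = J(û) + dᵀP⁻¹d + (Gd)ᵀC⁻¹(Gd)`. The Kalman update solves the normal equation because
`(P⁻¹ + GᵀC⁻¹G) PGᵀ = GᵀC⁻¹(GPGᵀ + C)`.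
-/

open Matrix

namespace Matrix

variable {ι κ α : Type*} [Fintype ι] [Fintype κ]

theorem add_dotProduct_mulVec_add_of_isSymm [CommRing α] {Q : Matrix ι ι α} (hQ : Q.IsSymm)
    (x d : ι → α) :
    (x + d) ⬝ᵥ (Q *ᵥ (x + d)) = x ⬝ᵥ (Q *ᵥ x) + 2 * (d ⬝ᵥ (Q *ᵥ x)) + d ⬝ᵥ (Q *ᵥ d) := by
  have hswap : x ⬝ᵥ (Q *ᵥ d) = d ⬝ᵥ (Q *ᵥ x) := by
    rw [← dotProduct_transpose_mulVec, hQ.eq]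
  simp only [mulVec_add, dotProduct_add, add_dotProduct, hswap]
  ring

def glsCost [CommRing α] (Q : Matrix ι ι α) (R : Matrix κ κ α) (G : Matrix κ ι α) (a : ι → α)
    (o : κ → α) (u : ι → α) : α :=
  (u - a) ⬝ᵥ (Q *ᵥ (u - a)) + (G *ᵥ u - o) ⬝ᵥ (R *ᵥ (G *ᵥ u - o))

theorem glsCost_add_of_normal_eq [CommRing α] {Q : Matrix ι ι α} {R : Matrix κ κ α}
    (hQ : Q.IsSymm) (hR : R.IsSymm) {G : Matrix κ ι α} {a x : ι → α} {o : κ → α}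
    (hx : Q *ᵥ (x - a) + Gᵀ *ᵥ (R *ᵥ (G *ᵥ x - o)) = 0) (d : ι → α) :
    glsCost Q R G a o (x + d) =
      glsCost Q R G a o x + d ⬝ᵥ (Q *ᵥ d) + (G *ᵥ d) ⬝ᵥ (R *ᵥ (G *ᵥ d)) := by
  have hcross : d ⬝ᵥ (Q *ᵥ (x - a)) + (G *ᵥ d) ⬝ᵥ (R *ᵥ (G *ᵥ x - o)) = 0 := by
    rw [dotProduct_comm (G *ᵥ d), ← dotProduct_transpose_mulVec G d, ← dotProduct_add, hx,
      dotProduct_zero]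
  have hprior : x + d - a = (x - a) + d := by abel
  have hobs : G *ᵥ (x + d) - o = (G *ᵥ x - o) + G *ᵥ d := by rw [mulVec_add]; abel
  unfold glsCost
  rw [hprior, hobs, add_dotProduct_mulVec_add_of_isSymm hQ,
    add_dotProduct_mulVec_add_of_isSymm hR]
  linear_combination 2 * hcross

theorem glsCost_lt_of_normal_eq {Q : Matrix ι ι ℝ} {R : Matrix κ κ ℝ} (hQ : Q.PosDef)
    (hR : R.PosSemidef) {G : Matrix κ ι ℝ} {a x : ι → ℝ} {o : κ → ℝ}
    (hx : Q *ᵥ (x - a) + Gᵀ *ᵥ (R *ᵥ (G *ᵥ x - o)) = 0) {u : ι → ℝ} (hu : u ≠ x) :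
    glsCost Q R G a o x < glsCost Q R G a o u := by
  have hd : u - x ≠ 0 := sub_ne_zero.mpr hu
  have hprior : 0 < (u - x) ⬝ᵥ (Q *ᵥ (u - x)) := by simpa using hQ.dotProduct_mulVec_pos hd
  have hobs : 0 ≤ (G *ᵥ (u - x)) ⬝ᵥ (R *ᵥ (G *ᵥ (u - x))) := by
    simpa using hR.dotProduct_mulVec_nonneg (G *ᵥ (u - x))
  have hexpand := glsCost_add_of_normal_eq (isHermitian_iff_isSymm.mp hQ.isHermitian)
    (isHermitian_iff_isSymm.mp hR.isHermitian) hx (u - x)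
  rw [add_sub_cancel] at hexpand
  linarith

variable [DecidableEq ι] [DecidableEq κ]

noncomputable def kalmanGain [Field α] (P : Matrix ι ι α) (G : Matrix κ ι α) (C : Matrix κ κ α) :
    Matrix ι κ α :=
  P * Gᵀ * (G * P * Gᵀ + C)⁻¹

theorem inv_add_transpose_mul_inv_mul_mul_kalmanGain [Field α] {P : Matrix ι ι α}
    {C : Matrix κ κ α} (G : Matrix κ ι α) (hP : IsUnit P) (hC : IsUnit C)
    (hS : IsUnit (G * P * Gᵀ + C)) :
    (P⁻¹ + Gᵀ * C⁻¹ * G) * kalmanGain P G C = Gᵀ * C⁻¹ := by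
  rw [isUnit_iff_isUnit_det] at hP hC hS
  have hPGt : (P⁻¹ + Gᵀ * C⁻¹ * G) * (P * Gᵀ) = Gᵀ * C⁻¹ * (G * P * Gᵀ + C) := by
    rw [Matrix.add_mul, Matrix.mul_add, ← Matrix.mul_assoc P⁻¹, nonsing_inv_mul P hP,
      Matrix.one_mul, Matrix.mul_assoc Gᵀ C⁻¹ C, nonsing_inv_mul C hC, Matrix.mul_one]
    simp only [Matrix.mul_assoc]
    abel
  rw [kalmanGain, ← Matrix.mul_assoc, hPGt, Matrix.mul_assoc, mul_nonsing_inv _ hS,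
    Matrix.mul_one]

theorem kalmanUpdate_normal_eq [Field α] {P : Matrix ι ι α} {C : Matrix κ κ α}
    (G : Matrix κ ι α) (hP : IsUnit P) (hC : IsUnit C) (hS : IsUnit (G * P * Gᵀ + C))
    (a : ι → α) (o : κ → α) :
    P⁻¹ *ᵥ (a + kalmanGain P G C *ᵥ (o - G *ᵥ a) - a) +
      Gᵀ *ᵥ (C⁻¹ *ᵥ (G *ᵥ (a + kalmanGain P G C *ᵥ (o - G *ᵥ a)) - o)) = 0 := by
  set K := kalmanGain P G C
  set w := o - G *ᵥ a
  have hobs : G *ᵥ (a + K *ᵥ w) - o = G *ᵥ (K *ᵥ w) - w := by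
    rw [mulVec_add]; simp only [w]; abel
  have hgradient : P⁻¹ *ᵥ (K *ᵥ w) + Gᵀ *ᵥ (C⁻¹ *ᵥ (G *ᵥ (K *ᵥ w) - w)) =
      ((P⁻¹ + Gᵀ * C⁻¹ * G) * K - Gᵀ * C⁻¹) *ᵥ w := by
    simp only [sub_mulVec, Matrix.add_mul, add_mulVec, mulVec_sub, mulVec_mulVec,
      Matrix.mul_assoc]
    abel
  rw [add_sub_cancel_left, hobs, hgradient,
    inv_add_transpose_mul_inv_mul_mul_kalmanGain G hP hC hS, sub_self, zero_mulVec]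

end Matrix

/-- **Duncan–Horn equivalence, one-step form.** The function
`u ↦ (u − a)ᵀP⁻¹(u − a) + (Gu − o)ᵀC⁻¹(Gu − o)` has a unique global minimizer, given by the
Kalman measurement update `û = a + PGᵀ(GPGᵀ + C)⁻¹(o − Ga)`. -/
theorem duncan_horn_measurement_update {n m : ℕ}
    (P : Matrix (Fin n) (Fin n) ℝ) (C : Matrix (Fin m) (Fin m) ℝ)
    (hP : P.PosDef) (hC : C.PosDef)
    (G : Matrix (Fin m) (Fin n) ℝ) (a : Fin n → ℝ) (o : Fin m → ℝ) :
    ∀ u : Fin n → ℝ,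
      u ≠ a + (P * Gᵀ * (G * P * Gᵀ + C)⁻¹) *ᵥ (o - G *ᵥ a) →
      ((a + (P * Gᵀ * (G * P * Gᵀ + C)⁻¹) *ᵥ (o - G *ᵥ a) - a) ⬝ᵥ
          (P⁻¹ *ᵥ (a + (P * Gᵀ * (G * P * Gᵀ + C)⁻¹) *ᵥ (o - G *ᵥ a) - a)) +
        (G *ᵥ (a + (P * Gᵀ * (G * P * Gᵀ + C)⁻¹) *ᵥ (o - G *ᵥ a)) - o) ⬝ᵥ
          (C⁻¹ *ᵥ (G *ᵥ (a + (P * Gᵀ * (G * P * Gᵀ + C)⁻¹) *ᵥ (o - G *ᵥ a)) - o))) <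
      ((u - a) ⬝ᵥ (P⁻¹ *ᵥ (u - a)) + (G *ᵥ u - o) ⬝ᵥ (C⁻¹ *ᵥ (G *ᵥ u - o))) := by
  intro u hu
  have hS : (G * P * Gᵀ + C).PosDef := by
    simpa using PosDef.posSemidef_add (hP.posSemidef.mul_mul_conjTranspose_same G) hC
  exact glsCost_lt_of_normal_eq hP.inv hC.inv.posSemidef
    (kalmanUpdate_normal_eq G hP.isUnit hC.isUnit hS.isUnit a o) hu
end
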